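/- arXiv:2509.24962 — 3 statements merged into one kernel-verified Lean document; each statement's English description precedes it below -/
import Mathlib

section
/- Under the mixture setup, the expected multiplicative overlap-adaptive regularization function is bounded by a product of chi-square-type divergence terms: ∫ (1/(4·π(x)·(1−π(x))) − 1) dμ(x) ≤ (1/(4·π₀·π₁)) · sqrt(∫ ((dμ/dν₀)(x))² dμ(x)) · sqrt(∫ ((dμ/dν₁)(x))² dμ(x)), assuming the integrals on the right-hand side are finite. -/
/-!
Since `π = π₁ f₁` and `1 - π = π₀ f₀` with `f_a = dν_a/dμ = (dμ/dν_a)⁻¹`, the overlap weight satisfies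
`1 / (4 π (1 - π)) = (dμ/dν₀) (dμ/dν₁) / (4 π₀ π₁)` pointwise. Integrating, the `- 1` contributes
`- μ(X) ≤ 0`, and Cauchy–Schwarz in `L²(μ)` bounds the integral of the product of the two
Radon–Nikodym derivatives.
-/

open MeasureTheory

namespace MeasureTheory

variable {α : Type*} [MeasurableSpace α]

lemma Measure.toReal_rnDeriv_eq_inv {μ ν : Measure α} [SigmaFinite μ] [SigmaFinite ν]
    (hμν : μ ≪ ν) : ∀ᵐ x ∂μ, (μ.rnDeriv ν x).toReal = (ν.rnDeriv μ x).toReal⁻¹ := by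
  filter_upwards [Measure.inv_rnDeriv' hμν] with x hx
  rw [← hx, Pi.inv_apply, ENNReal.toReal_inv]

lemma Measure.memLp_two_toReal_rnDeriv {μ ν ρ : Measure α}
    (h : Integrable (fun x => (μ.rnDeriv ν x).toReal ^ 2) ρ) :
    MemLp (fun x => (μ.rnDeriv ν x).toReal) 2 ρ :=
  (memLp_two_iff_integrable_sq
    (Measure.measurable_rnDeriv μ ν).ennreal_toReal.aestronglyMeasurable).mpr h

lemma integral_mul_le_sqrt_mul_sqrt {μ : Measure α} {f g : α → ℝ}
    (hf₀ : 0 ≤ᵐ[μ] f) (hg₀ : 0 ≤ᵐ[μ] g) (hf : MemLp f 2 μ) (hg : MemLp g 2 μ) :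
    ∫ x, f x * g x ∂μ ≤ √(∫ x, f x ^ 2 ∂μ) * √(∫ x, g x ^ 2 ∂μ) := by
  have h := integral_mul_le_Lp_mul_Lq_of_nonneg Real.HolderConjugate.two_two hf₀ hg₀
    (by simpa using hf) (by simpa using hg)
  simpa [Real.sqrt_eq_rpow] using h

end MeasureTheory

theorem oar_multiplicative_bound_general
    {X : Type*} [MeasurableSpace X]
    (ν₀ ν₁ : Measure X) [IsProbabilityMeasure ν₀] [IsProbabilityMeasure ν₁]
    (π₀ π₁ : ℝ) (hπ₀ : 0 < π₀) (hπ₁ : 0 < π₁)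
    (μ : Measure X)
    (hμ : μ = ENNReal.ofReal π₀ • ν₀ + ENNReal.ofReal π₁ • ν₁)
    (hac₀ : μ ≪ ν₀) (hac₁ : μ ≪ ν₁)
    (prop : X → ℝ)
    (hprop : ∀ᵐ x ∂μ, prop x = π₁ * (ν₁.rnDeriv μ x).toReal)
    (hprop' : ∀ᵐ x ∂μ, 1 - prop x = π₀ * (ν₀.rnDeriv μ x).toReal)
    (hint₀ : Integrable (fun x => ((μ.rnDeriv ν₀ x).toReal) ^ 2) μ)
    (hint₁ : Integrable (fun x => ((μ.rnDeriv ν₁ x).toReal) ^ 2) μ) :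
    ∫ x, (1 / (4 * prop x * (1 - prop x)) - 1) ∂μ ≤
      (1 / (4 * π₀ * π₁)) *
        Real.sqrt (∫ x, ((μ.rnDeriv ν₀ x).toReal) ^ 2 ∂μ) *
        Real.sqrt (∫ x, ((μ.rnDeriv ν₁ x).toReal) ^ 2 ∂μ) := by
  have : IsFiniteMeasure μ := by
    have := ν₀.smul_finite (ENNReal.ofReal_ne_top (r := π₀))
    have := ν₁.smul_finite (ENNReal.ofReal_ne_top (r := π₁))
    rw [hμ]; infer_instance
  set g₀ := fun x => (μ.rnDeriv ν₀ x).toReal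
  set g₁ := fun x => (μ.rnDeriv ν₁ x).toReal
  set c := 1 / (4 * π₀ * π₁)
  have hL₀ : MemLp g₀ 2 μ := Measure.memLp_two_toReal_rnDeriv hint₀
  have hL₁ : MemLp g₁ 2 μ := Measure.memLp_two_toReal_rnDeriv hint₁
  have h_overlap : ∀ᵐ x ∂μ, 1 / (4 * prop x * (1 - prop x)) - 1 = c * (g₀ x * g₁ x) - 1 := by
    filter_upwards [hprop, hprop', Measure.toReal_rnDeriv_eq_inv hac₀,
      Measure.toReal_rnDeriv_eq_inv hac₁] with x h₁ h₀ e₀ e₁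
    rw [h₀, h₁]
    simp only [g₀, g₁, c, e₀, e₁, one_div, mul_inv]
    ring
  have h_prod : Integrable (fun x => g₀ x * g₁ x) μ := hL₀.integrable_mul hL₁
  have h_CS := integral_mul_le_sqrt_mul_sqrt (.of_forall fun x => ENNReal.toReal_nonneg)
    (.of_forall fun x => ENNReal.toReal_nonneg) hL₀ hL₁
  calc ∫ x, (1 / (4 * prop x * (1 - prop x)) - 1) ∂μ
      = c * ∫ x, g₀ x * g₁ x ∂μ - μ.real Set.univ := by
        rw [integral_congr_ae h_overlap, integral_sub (h_prod.const_mul c) (integrable_const 1),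
          integral_const_mul, integral_const, smul_eq_mul, mul_one]
    _ ≤ c * ∫ x, g₀ x * g₁ x ∂μ := sub_le_self _ measureReal_nonneg
    _ ≤ c * (√(∫ x, g₀ x ^ 2 ∂μ) * √(∫ x, g₁ x ^ 2 ∂μ)) :=
        mul_le_mul_of_nonneg_left h_CS (by positivity)
    _ = _ := (mul_assoc ..).symm

/-- Proposition 1 (multiplicative case): under the mixture setup, the expected
multiplicative overlap-adaptive regularization function is bounded by a product of
chi-square-type divergence terms. -/
theorem oar_multiplicative_bound
    {X : Type*} [MeasurableSpace X]
    (ν₀ ν₁ : Measure X) [IsProbabilityMeasure ν₀] [IsProbabilityMeasure ν₁]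
    (π₀ π₁ : ℝ) (hπ₀ : 0 < π₀) (hπ₀' : π₀ < 1) (hπ₁ : 0 < π₁) (hπ₁' : π₁ < 1)
    (hsum : π₀ + π₁ = 1)
    (μ : Measure X)
    (hμ : μ = ENNReal.ofReal π₀ • ν₀ + ENNReal.ofReal π₁ • ν₁)
    (hac₀ : μ ≪ ν₀) (hac₁ : μ ≪ ν₁) (hac₀' : ν₀ ≪ μ) (hac₁' : ν₁ ≪ μ)
    (hpos₀ : ∀ᵐ x ∂μ, 0 < (ν₀.rnDeriv μ x).toReal)
    (hpos₁ : ∀ᵐ x ∂μ, 0 < (ν₁.rnDeriv μ x).toReal)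
    (prop : X → ℝ)
    (hprop : ∀ᵐ x ∂μ, prop x = π₁ * (ν₁.rnDeriv μ x).toReal)
    (hprop' : ∀ᵐ x ∂μ, 1 - prop x = π₀ * (ν₀.rnDeriv μ x).toReal)
    (hint₀ : Integrable (fun x => ((μ.rnDeriv ν₀ x).toReal) ^ 2) μ)
    (hint₁ : Integrable (fun x => ((μ.rnDeriv ν₁ x).toReal) ^ 2) μ) :
    ∫ x, (1 / (4 * prop x * (1 - prop x)) - 1) ∂μ ≤
      (1 / (4 * π₀ * π₁)) *
        Real.sqrt (∫ x, ((μ.rnDeriv ν₀ x).toReal) ^ 2 ∂μ) *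
        Real.sqrt (∫ x, ((μ.rnDeriv ν₁ x).toReal) ^ 2 ∂μ) :=
  oar_multiplicative_bound_general ν₀ ν₁ π₀ π₁ hπ₀ hπ₁ μ hμ hac₀ hac₁ prop hprop hprop' hint₀ hint₁
end

section
/- Under the mixture setup, the expected logarithmic overlap-adaptive regularization function decomposes exactly into a constant plus two Kullback–Leibler divergences: ∫ −log(4·π(x)·(1−π(x))) dμ(x) = −log(4·π₀·π₁) + ∫ log((dμ/dν₀)(x)) dμ(x) + ∫ log((dμ/dν₁)(x)) dμ(x), where the two integrals on the right are KL(μ ‖ ν₀) and KL(μ ‖ ν₁), assuming the functions log(dμ/dν₀) and log(dμ/dν₁) are μ-integrable. -/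
open MeasureTheory

/-- Proposition 1 (logarithmic case): under the mixture setup, the expected
logarithmic overlap-adaptive regularization function decomposes exactly into a
constant plus two Kullback–Leibler divergences `KL(μ ‖ ν₀)` and `KL(μ ‖ ν₁)`. -/
theorem oar_logarithmic_decomposition
    {X : Type*} [MeasurableSpace X]
    (ν₀ ν₁ : Measure X) [IsProbabilityMeasure ν₀] [IsProbabilityMeasure ν₁]
    (π₀ π₁ : ℝ) (hπ₀ : 0 < π₀) (hπ₀' : π₀ < 1) (hπ₁ : 0 < π₁) (hπ₁' : π₁ < 1)
    (hsum : π₀ + π₁ = 1)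
    (μ : Measure X)
    (hμ : μ = ENNReal.ofReal π₀ • ν₀ + ENNReal.ofReal π₁ • ν₁)
    (hac₀ : μ ≪ ν₀) (hac₁ : μ ≪ ν₁) (hac₀' : ν₀ ≪ μ) (hac₁' : ν₁ ≪ μ)
    (hpos₀ : ∀ᵐ x ∂μ, 0 < (ν₀.rnDeriv μ x).toReal)
    (hpos₁ : ∀ᵐ x ∂μ, 0 < (ν₁.rnDeriv μ x).toReal)
    (prop : X → ℝ)
    (hprop : ∀ᵐ x ∂μ, prop x = π₁ * (ν₁.rnDeriv μ x).toReal)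
    (hprop' : ∀ᵐ x ∂μ, 1 - prop x = π₀ * (ν₀.rnDeriv μ x).toReal)
    (hint₀ : Integrable (fun x => Real.log ((μ.rnDeriv ν₀ x).toReal)) μ)
    (hint₁ : Integrable (fun x => Real.log ((μ.rnDeriv ν₁ x).toReal)) μ) :
    ∫ x, -Real.log (4 * prop x * (1 - prop x)) ∂μ =
      -Real.log (4 * π₀ * π₁)
        + ∫ x, Real.log ((μ.rnDeriv ν₀ x).toReal) ∂μ
        + ∫ x, Real.log ((μ.rnDeriv ν₁ x).toReal) ∂μ := by
  have hprob : IsProbabilityMeasure μ := by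
    constructor
    rw [hμ]
    simp [ENNReal.smul_def, ← ENNReal.ofReal_add hπ₀.le hπ₁.le, hsum]
  have hsf : SigmaFinite μ := inferInstance
  -- inverse relations
  have hinv₀ : ∀ᵐ x ∂μ, (μ.rnDeriv ν₀ x).toReal = ((ν₀.rnDeriv μ x).toReal)⁻¹ := by
    filter_upwards [hac₀.ae_le (Measure.inv_rnDeriv hac₀')] with x hx
    rw [← hx]
    simp [ENNReal.toReal_inv]
  have hinv₁ : ∀ᵐ x ∂μ, (μ.rnDeriv ν₁ x).toReal = ((ν₁.rnDeriv μ x).toReal)⁻¹ := by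
    filter_upwards [hac₁.ae_le (Measure.inv_rnDeriv hac₁')] with x hx
    rw [← hx]
    simp [ENNReal.toReal_inv]
  have hC : (0:ℝ) < 4 * π₀ * π₁ := by positivity
  have hae : ∀ᵐ x ∂μ, -Real.log (4 * prop x * (1 - prop x)) =
      -Real.log (4 * π₀ * π₁)
        + Real.log ((μ.rnDeriv ν₀ x).toReal)
        + Real.log ((μ.rnDeriv ν₁ x).toReal) := by
    filter_upwards [hpos₀, hpos₁, hprop, hprop', hinv₀, hinv₁] with x h0 h1 hp hp' hi0 hi1
    have e : 4 * prop x * (1 - prop x)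
        = (4 * π₀ * π₁) * ((ν₀.rnDeriv μ x).toReal * (ν₁.rnDeriv μ x).toReal) := by
      rw [hp', hp]; ring
    rw [e, Real.log_mul hC.ne' (by positivity),
      Real.log_mul h0.ne' h1.ne', hi0, hi1, Real.log_inv, Real.log_inv]
    ring
  rw [integral_congr_ae hae]
  rw [integral_add (by exact (integrable_const _).add hint₀) hint₁,
    integral_add (integrable_const _) hint₀]
  simp
end

section
/- Under the mixture setup, the expected squared-multiplicative overlap-adaptive regularization function satisfies: ∫ (1/(16·(π(x)·(1−π(x)))²) − 1) dμ(x) ≤ (1/(16·π₀²·π₁²)) · sqrt(∫ ((dμ/dν₀)(x))⁴ dμ(x)) · sqrt(∫ ((dμ/dν₁)(x))⁴ dμ(x)), assuming the integrals on the right-hand side are finite. -/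
open MeasureTheory

/-!
Since `dμ/dνₐ = 1/fₐ` a.e., the propensity identities turn the regularization function into
`1/(16 π₀² π₁²) · (dμ/dν₀)² (dμ/dν₁)² - 1`; dropping the `-1` (μ is finite) and applying
Cauchy–Schwarz to `(dμ/dν₀)²` and `(dμ/dν₁)²` gives the bound.
-/

namespace MeasureTheory

variable {α : Type*} [MeasurableSpace α] {μ ν : Measure α} {f g : α → ℝ}

theorem integral_mul_le_sqrt_integral_sq_mul_sqrt_integral_sq (hf : 0 ≤ᵐ[μ] f)
    (hg : 0 ≤ᵐ[μ] g) (hf₂ : MemLp f 2 μ) (hg₂ : MemLp g 2 μ) :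
    ∫ x, f x * g x ∂μ ≤ √(∫ x, f x ^ 2 ∂μ) * √(∫ x, g x ^ 2 ∂μ) := by
  have := integral_mul_le_Lp_mul_Lq_of_nonneg Real.HolderConjugate.two_two hf hg
    (by simpa using hf₂) (by simpa using hg₂)
  simpa [Real.sqrt_eq_rpow] using this

theorem memLp_two_sq_of_integrable_pow_four (hf : AEStronglyMeasurable f μ)
    (hf₄ : Integrable (fun x => f x ^ 4) μ) : MemLp (fun x => f x ^ 2) 2 μ :=
  (memLp_two_iff_integrable_sq (hf.pow 2)).2 (by simpa [← pow_mul] using hf₄)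

theorem Measure.toReal_rnDeriv_ae_eq_inv [SigmaFinite μ] [SigmaFinite ν] (hμν : μ ≪ ν) :
    (fun x => (μ.rnDeriv ν x).toReal) =ᵐ[μ] fun x => (ν.rnDeriv μ x).toReal⁻¹ := by
  filter_upwards [Measure.inv_rnDeriv' hμν] with x hx
  rw [← hx, Pi.inv_apply, ENNReal.toReal_inv]

end MeasureTheory

theorem oar_squared_multiplicative_bound_general
    {X : Type*} [MeasurableSpace X]
    (ν₀ ν₁ : Measure X) [IsProbabilityMeasure ν₀] [IsProbabilityMeasure ν₁]
    (π₀ π₁ : ℝ)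
    (μ : Measure X)
    (hμ : μ = ENNReal.ofReal π₀ • ν₀ + ENNReal.ofReal π₁ • ν₁)
    (hac₀ : μ ≪ ν₀) (hac₁ : μ ≪ ν₁)
    (prop : X → ℝ)
    (hprop : ∀ᵐ x ∂μ, prop x = π₁ * (ν₁.rnDeriv μ x).toReal)
    (hprop' : ∀ᵐ x ∂μ, 1 - prop x = π₀ * (ν₀.rnDeriv μ x).toReal)
    (hint₀ : Integrable (fun x => ((μ.rnDeriv ν₀ x).toReal) ^ 4) μ)
    (hint₁ : Integrable (fun x => ((μ.rnDeriv ν₁ x).toReal) ^ 4) μ) :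
    ∫ x, (1 / (16 * (prop x * (1 - prop x)) ^ 2) - 1) ∂μ ≤
      (1 / (16 * π₀ ^ 2 * π₁ ^ 2)) *
        Real.sqrt (∫ x, ((μ.rnDeriv ν₀ x).toReal) ^ 4 ∂μ) *
        Real.sqrt (∫ x, ((μ.rnDeriv ν₁ x).toReal) ^ 4 ∂μ) := by
  have : IsFiniteMeasure μ := by
    subst hμ
    have := ν₀.smul_finite (c := ENNReal.ofReal π₀) ENNReal.ofReal_ne_top
    have := ν₁.smul_finite (c := ENNReal.ofReal π₁) ENNReal.ofReal_ne_top
    infer_instance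
  set c : ℝ := 1 / (16 * π₀ ^ 2 * π₁ ^ 2)
  set g₀ : X → ℝ := fun x => (μ.rnDeriv ν₀ x).toReal
  set g₁ : X → ℝ := fun x => (μ.rnDeriv ν₁ x).toReal
  have hg₀ : MemLp (fun x => g₀ x ^ 2) 2 μ := memLp_two_sq_of_integrable_pow_four
    (Measure.measurable_rnDeriv μ ν₀).ennreal_toReal.aestronglyMeasurable hint₀
  have hg₁ : MemLp (fun x => g₁ x ^ 2) 2 μ := memLp_two_sq_of_integrable_pow_four
    (Measure.measurable_rnDeriv μ ν₁).ennreal_toReal.aestronglyMeasurable hint₁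
  have hreg : (fun x => 1 / (16 * (prop x * (1 - prop x)) ^ 2) - 1)
      =ᵐ[μ] fun x => c * (g₀ x ^ 2 * g₁ x ^ 2) - 1 := by
    filter_upwards [hprop, hprop', Measure.toReal_rnDeriv_ae_eq_inv hac₀,
      Measure.toReal_rnDeriv_ae_eq_inv hac₁] with x h₁ h₀ hg₀x hg₁x
    rw [h₀, h₁]
    simp only [c, g₀, g₁, hg₀x, hg₁x]
    ring
  have hprod : Integrable (fun x => c * (g₀ x ^ 2 * g₁ x ^ 2)) μ :=
    (hg₀.integrable_mul hg₁).const_mul c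
  calc ∫ x, (1 / (16 * (prop x * (1 - prop x)) ^ 2) - 1) ∂μ
      = ∫ x, (c * (g₀ x ^ 2 * g₁ x ^ 2) - 1) ∂μ := integral_congr_ae hreg
    _ ≤ ∫ x, c * (g₀ x ^ 2 * g₁ x ^ 2) ∂μ :=
        integral_mono (hprod.sub (integrable_const 1)) hprod fun x => by simp
    _ = c * ∫ x, g₀ x ^ 2 * g₁ x ^ 2 ∂μ := integral_const_mul c _
    _ ≤ c * (√(∫ x, g₀ x ^ 4 ∂μ) * √(∫ x, g₁ x ^ 4 ∂μ)) := by
        gcongr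
        simpa [← pow_mul] using integral_mul_le_sqrt_integral_sq_mul_sqrt_integral_sq
          (.of_forall fun x => sq_nonneg (g₀ x)) (.of_forall fun x => sq_nonneg (g₁ x)) hg₀ hg₁
    _ = _ := (mul_assoc _ _ _).symm

/-- Proposition 1 (squared-multiplicative case): under the mixture setup, the expected
squared-multiplicative overlap-adaptive regularization function is bounded by a product
of f-divergence-type terms with fourth-power densities. -/
theorem oar_squared_multiplicative_bound
    {X : Type*} [MeasurableSpace X]
    (ν₀ ν₁ : Measure X) [IsProbabilityMeasure ν₀] [IsProbabilityMeasure ν₁]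
    (π₀ π₁ : ℝ) (hπ₀ : 0 < π₀) (hπ₀' : π₀ < 1) (hπ₁ : 0 < π₁) (hπ₁' : π₁ < 1)
    (hsum : π₀ + π₁ = 1)
    (μ : Measure X)
    (hμ : μ = ENNReal.ofReal π₀ • ν₀ + ENNReal.ofReal π₁ • ν₁)
    (hac₀ : μ ≪ ν₀) (hac₁ : μ ≪ ν₁) (hac₀' : ν₀ ≪ μ) (hac₁' : ν₁ ≪ μ)
    (hpos₀ : ∀ᵐ x ∂μ, 0 < (ν₀.rnDeriv μ x).toReal)
    (hpos₁ : ∀ᵐ x ∂μ, 0 < (ν₁.rnDeriv μ x).toReal)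
    (prop : X → ℝ)
    (hprop : ∀ᵐ x ∂μ, prop x = π₁ * (ν₁.rnDeriv μ x).toReal)
    (hprop' : ∀ᵐ x ∂μ, 1 - prop x = π₀ * (ν₀.rnDeriv μ x).toReal)
    (hint₀ : Integrable (fun x => ((μ.rnDeriv ν₀ x).toReal) ^ 4) μ)
    (hint₁ : Integrable (fun x => ((μ.rnDeriv ν₁ x).toReal) ^ 4) μ) :
    ∫ x, (1 / (16 * (prop x * (1 - prop x)) ^ 2) - 1) ∂μ ≤
      (1 / (16 * π₀ ^ 2 * π₁ ^ 2)) *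
        Real.sqrt (∫ x, ((μ.rnDeriv ν₀ x).toReal) ^ 4 ∂μ) *
        Real.sqrt (∫ x, ((μ.rnDeriv ν₁ x).toReal) ^ 4 ∂μ) :=
  oar_squared_multiplicative_bound_general ν₀ ν₁ π₀ π₁ μ hμ hac₀ hac₁ prop hprop hprop' hint₀ hint₁
end
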